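/- For every n ≥ 1 and all 0 ≤ j, k ≤ n, c_{n,k}(j) = c_{n,n-k}(n-j), where c_{n,k}(j) = ∑_{i=0}^{k} (-1)^i (k+1-i)^{n-j} (k-i)^j C(n+1,i). -/

import Mathlib

open Finset

/-- Number of weak excedances of a permutation of [n] (indices i with p_i ≥ i). -/
def wexc (n : ℕ) (π : Equiv.Perm (Fin n)) : ℕ :=
  (Finset.univ.filter (fun i : Fin n => (i : ℕ) ≤ (π i : ℕ))).card

/-- Number of ascents of a permutation of [n] (indices i < n with p_i < p_{i+1}). -/
def asc (n : ℕ) (π : Equiv.Perm (Fin n)) : ℕ :=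
  (Finset.univ.filter (fun i : Fin n => ∃ j : Fin n, (j : ℕ) = (i : ℕ) + 1 ∧ π i < π j)).card

/-- Eulerian number: number of permutations of [n] with exactly k weak excedances. -/
def eulerian (n k : ℕ) : ℕ :=
  (Finset.univ.filter (fun π : Equiv.Perm (Fin n) => wexc n π = k)).card

/-- The coefficient c_{n,k}(j). -/
def c (n k j : ℕ) : ℤ :=
  ∑ i ∈ Finset.range (k + 1),
    (-1 : ℤ) ^ i * ((k + 1 - i : ℕ) : ℤ) ^ (n - j) * ((k - i : ℕ) : ℤ) ^ j * ((n + 1).choose i)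

open Polynomial in
lemma fwdDiff_iter_poly (n : ℕ) : ∀ p : ℤ[X], p.natDegree ≤ n →
    (fwdDiff (1:ℤ))^[n+1] (fun x : ℤ => p.eval x) = 0 := by
  induction n with
  | zero =>
    intro p hp
    rw [Polynomial.eq_C_of_natDegree_le_zero hp]
    funext x
    simp [fwdDiff]
  | succ n ih =>
    intro p hp
    have key : fwdDiff (1:ℤ) (fun x : ℤ => p.eval x)
        = fun x : ℤ => (p.comp (X + C 1) - p).eval x := by
      funext x
      simp [fwdDiff, Polynomial.eval_comp]
    rw [Function.iterate_succ_apply, key]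
    by_cases h0 : p.natDegree = 0
    · have hz : p.comp (X + C 1) - p = 0 := by
        rw [Polynomial.eq_C_of_natDegree_le_zero h0.le]; simp
      rw [hz]
      simpa using ih 0 (by simp)
    · apply ih
      have hp0 : p ≠ 0 := fun h => h0 (by simp [h])
      have hX : (X + C (1:ℤ)).natDegree = 1 := natDegree_X_add_C 1
      have hdc : (p.comp (X + C 1)).natDegree = p.natDegree := by
        rw [natDegree_comp, hX, mul_one]
      have hlc : (p.comp (X + C 1)).leadingCoeff = p.leadingCoeff := by
        have h1 : (X + C (1:ℤ)).leadingCoeff = 1 := leadingCoeff_X_add_C 1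
        rw [leadingCoeff_comp (by rw [hX]; omega), h1, one_pow, mul_one]
      have hdeq : (p.comp (X + C 1)).degree = p.degree := by
        rw [degree_eq_natDegree (comp_X_add_C_ne_zero_iff.mpr hp0),
          degree_eq_natDegree hp0, hdc]
      have hlt : (p.comp (X + C 1) - p).degree < p.degree :=
        hdeq ▸ degree_sub_lt hdeq (comp_X_add_C_ne_zero_iff.mpr hp0) hlc
      by_cases hq : p.comp (X + C 1) - p = 0
      · rw [hq]; simp
      · have := Polynomial.natDegree_lt_natDegree hq hlt
        omega

open Polynomial in
lemma neg_one_pow_sub (m l : ℕ) (h : l ≤ m) : (-1:ℤ)^(m-l) = (-1)^m * (-1)^l := by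
  have hll : (-1:ℤ)^l * (-1)^l = 1 := by
    rw [← pow_add]; exact Even.neg_one_pow ⟨l, rfl⟩
  calc (-1:ℤ)^(m-l) = ((-1:ℤ)^l * (-1)^l) * (-1)^(m-l) := by rw [hll, one_mul]
    _ = (-1)^(l + (m-l)) * (-1)^l := by rw [pow_add]; ring
    _ = (-1)^m * (-1)^l := by rw [Nat.add_sub_cancel' h]

open Polynomial in
theorem stmt8 (n j k : ℕ) (hn : 1 ≤ n) (hj : j ≤ n) (hk : k ≤ n) :
    c n k j = c n (n - k) (n - j) := by
  set g : ℤ[X] := (C ((k:ℤ)+1) - X)^(n-j) * (C (k:ℤ) - X)^j with hg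
  set T : ℕ → ℤ := fun i => (-1:ℤ)^i * ((n+1).choose i) * g.eval (i:ℤ) with hT
  have hCX : ∀ a : ℤ, (C a - X).natDegree = 1 := fun a => by
    rw [show C a - X = -(X - C a) by ring, natDegree_neg, natDegree_X_sub_C]
  have hdeg : g.natDegree ≤ n := by
    refine le_trans natDegree_mul_le ?_
    have h1 : ((C ((k:ℤ)+1) - X)^(n-j)).natDegree ≤ (n-j) * 1 :=
      le_trans natDegree_pow_le (by rw [hCX])
    have h2 : ((C ((k:ℤ)) - X)^j).natDegree ≤ j * 1 :=
      le_trans natDegree_pow_le (by rw [hCX])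
    omega
  have hzero : ∑ i ∈ range (n+2), (-1:ℤ)^(n+1-i) * ((n+1).choose i) * g.eval (i:ℤ) = 0 := by
    have h := fwdDiff_iter_eq_sum_shift (1:ℤ) (fun x : ℤ => g.eval x) (n+1) 0
    rw [fwdDiff_iter_poly n g hdeg] at h
    simp only [Pi.zero_apply, smul_eq_mul, zero_add, nsmul_eq_mul, mul_one] at h
    rw [← h]
  have hzero' : ∑ i ∈ range (n+2), T i = 0 := by
    have key : ∀ i ∈ range (n+2),
        (-1:ℤ)^(n+1-i) * ((n+1).choose i) * g.eval (i:ℤ) = (-1:ℤ)^(n+1) * T i := by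
      intro i hi
      rw [mem_range] at hi
      rw [neg_one_pow_sub (n+1) i (by omega), hT]
      ring
    have := Finset.sum_congr rfl key
    rw [hzero, ← Finset.mul_sum] at this
    rcases mul_eq_zero.mp this.symm with h | h
    · exact absurd h (by positivity)
    · exact h
  have hsplit : ∑ i ∈ range (k+1), T i + ∑ i ∈ Ico (k+1) (n+2), T i = 0 := by
    rw [Finset.sum_range_add_sum_Ico _ (by omega : k+1 ≤ n+2)]; exact hzero'
  have hA : c n k j = ∑ i ∈ range (k+1), T i := by
    refine Finset.sum_congr rfl fun i hi => ?_
    rw [mem_range] at hi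
    have e1 : ((k + 1 - i : ℕ) : ℤ) = (k:ℤ) + 1 - i := by omega
    have e2 : ((k - i : ℕ) : ℤ) = (k:ℤ) - i := by omega
    simp only [hT, hg, eval_mul, eval_pow, eval_sub, eval_C, eval_X, e1, e2]
    ring
  have hB : c n (n-k) (n-j) = -∑ i ∈ Ico (k+1) (n+2), T i := by
    rw [← Finset.sum_neg_distrib]
    unfold c
    refine Finset.sum_nbij' (fun i => n+1-i) (fun i => n+1-i) ?_ ?_ ?_ ?_ ?_
    · intro a ha; rw [mem_range] at ha; rw [mem_Ico]; omega
    · intro a ha; rw [mem_Ico] at ha; rw [mem_range]; omega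
    · intro a ha; rw [mem_range] at ha; omega
    · intro a ha; rw [mem_Ico] at ha; omega
    · intro i hi
      rw [mem_range] at hi
      have hik : i ≤ n - k := by omega
      have hj' : n - (n - j) = j := by omega
      have e0 : ((n + 1 - i : ℕ) : ℤ) = (n:ℤ) + 1 - i := by omega
      have echoose : (n+1).choose (n+1-i) = (n+1).choose i :=
        Nat.choose_symm (by omega : i ≤ n+1)
      have f1 : (k:ℤ) + 1 - ((n:ℤ) + 1 - (i:ℤ)) = -((n - k - i : ℕ) : ℤ) := by omega
      have f2 : (k:ℤ) - ((n:ℤ) + 1 - (i:ℤ)) = -((n - k + 1 - i : ℕ) : ℤ) := by omega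
      have h7 : (-1:ℤ)^(n+1) * ((-1:ℤ)^(n-j) * (-1:ℤ)^j) = -1 := by
        rw [← pow_add, ← pow_add, show n+1+(n-j+j) = 2*n+1 by omega, pow_succ, pow_mul]
        norm_num
      rw [hT, hj']
      dsimp only
      rw [echoose, e0, hg]
      simp only [eval_mul, eval_pow, eval_sub, eval_C, eval_X]
      rw [f1, f2, neg_pow, neg_pow, neg_one_pow_sub (n+1) i (by omega)]
      linear_combination ((-1:ℤ)^i * (((n+1).choose i : ℕ) : ℤ)
        * (((n-k-i : ℕ):ℤ))^(n-j) * (((n-k+1-i : ℕ):ℤ))^j) * h7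
  rw [hA, hB]
  linarith [hsplit]
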